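/- Suppose λ is a cardinal of uncountable cofinality, T ⊆ ^{<λ}2 is a tree under end-extension such that each level T_ξ = T ∩ ^{ξ}2 is countable, and U is an ultrafilter over a set K that is ν-indecomposable for every uncountable cardinal ν < κ where cf(λ) < κ. Suppose ⟨f_α ∣ α ∈ K⟩ is a family of functions f_α : λ → 2 such that for every ξ < λ, X_ξ := {α ∈ K ∣ f_α ↾ ξ ∈ T_ξ} ∈ U. If cf(λ) > ℵ₀ and U is cf(λ)-indecomposable, then X* := ⋂_{ξ<λ} X_ξ ∈ U; in particular, if the f_α for α ∈ X* are pairwise distinct and X* has more than countably many elements while cf(λ) > ℵ₁, a contradiction arises, since a tree of height λ with countable levels and cf(λ) > ℵ₁ has at most countably many cofinal branches. -/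

import Mathlib

open Set Cardinal

/-- An ultrafilter `U` over `I` is `μ`-decomposable if there is `f : I → μ` such that
`f ⁻¹' H ∉ U` for every `H ⊆ μ` of cardinality `< μ`. -/
def MuDecomposable {I : Type} (U : Ultrafilter I) (μ : Cardinal.{0}) : Prop :=
  ∃ f : I → μ.out, ∀ H : Set μ.out, #H < μ → f ⁻¹' H ∉ U

/-! A cofinal sequence of length `cf(λ)` in `λ` turns the failure of `⋂_{ξ<λ} X_ξ ∈ U` into a
`cf(λ)`-decomposition of `U`: send `α` to a point of the sequence at which `α` has already left
the decreasing sets `X_ξ`. For the second part, `ℵ₁` distinct branches split at `ℵ₁` many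
levels; as `cf(λ) > ℵ₁` these are bounded by some `ξ < λ`, so the branches are already distinct
on the countable level `T_ξ`. -/

/-- `b ↾ ξ ∈ T ξ`. -/
def RestrictMem (T : Ordinal.{0} → Set (Ordinal.{0} → Bool)) (ξ : Ordinal.{0})
    (b : Ordinal.{0} → Bool) : Prop :=
  ∃ g ∈ T ξ, ∀ η < ξ, g η = b η

def IsBranch (T : Ordinal.{0} → Set (Ordinal.{0} → Bool)) (o : Ordinal.{0})
    (b : Ordinal.{0} → Bool) : Prop :=
  ∀ ξ < o, RestrictMem T ξ b

theorem MuDecomposable.of_mk_eq {I ι : Type} {U : Ultrafilter I} {μ : Cardinal.{0}}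
    (hι : #ι = μ) (g : I → ι) (hg : ∀ H : Set ι, #H < μ → g ⁻¹' H ∉ U) :
    MuDecomposable U μ := by
  obtain ⟨e⟩ := Cardinal.eq.mp (hι.trans (mk_out μ).symm)
  refine ⟨e ∘ g, fun H hH => ?_⟩
  rw [preimage_comp]
  exact hg _ (by rwa [← e.image_symm_eq_preimage, mk_image_eq e.symm.injective])

theorem Ordinal.exists_cofinal_family (o : Ordinal.{0}) :
    ∃ (ι : Type) (E : ι → Ordinal.{0}), #ι = o.cof ∧ (∀ i, E i < o) ∧ ∀ ξ < o, ∃ i, ξ ≤ E i := by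
  obtain ⟨s, hs, hcard⟩ := Order.exists_cof_eq o.ToType
  refine ⟨s, fun i => (ToType.toOrd i.1).1, by rwa [cof_toType] at hcard,
    fun i => (ToType.toOrd i.1).2, fun ξ hξ => ?_⟩
  obtain ⟨b, hb, hle⟩ := hs (ToType.mk ⟨ξ, hξ⟩)
  have hξb := ToType.mk.symm.monotone hle
  rw [OrderIso.symm_apply_apply] at hξb
  exact ⟨⟨b, hb⟩, hξb⟩

theorem Ultrafilter.biInter_lt_mem_of_antitoneOn {K : Type} (U : Ultrafilter K)
    {o : Ordinal.{0}} (hU : ¬ MuDecomposable U o.cof) {X : Ordinal.{0} → Set K}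
    (hanti : AntitoneOn X (Iio o)) (hX : ∀ ξ < o, X ξ ∈ U) : ⋂ ξ < o, X ξ ∈ U := by
  classical
  by_contra hnot
  obtain ⟨ι, E, hι, hEo, hEcof⟩ := o.exists_cofinal_family
  have escape : ∀ α ∉ ⋂ ξ < o, X ξ, ∃ i, α ∉ X (E i) := by
    intro α hα
    obtain ⟨ξ, hξ, hαξ⟩ : ∃ ξ < o, α ∉ X ξ := by simpa using hα
    obtain ⟨i, hi⟩ := hEcof ξ hξ
    exact ⟨i, fun h => hαξ (hanti hξ (hEo i) hi h)⟩
  choose idx hidx using escape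
  have : Nonempty ι := by
    obtain ⟨α, hα⟩ := U.nonempty_of_mem (U.compl_mem_iff_notMem.mpr hnot)
    exact ⟨idx α hα⟩
  let g : K → ι := fun α => if hα : α ∈ ⋂ ξ < o, X ξ then Classical.arbitrary ι else idx α hα
  refine hU (MuDecomposable.of_mk_eq hι g fun H hH hgH => hnot ?_)
  have hσ : ⨆ i : H, E i < o := Ordinal.iSup_lt_of_lt_cof hH fun i => hEo i
  refine Filter.mem_of_superset (Filter.inter_mem hgH (hX _ hσ)) fun α ⟨hαH, hασ⟩ => ?_
  by_contra hα
  have hgα : g α = idx α hα := dif_neg hα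
  have hle : E (idx α hα) ≤ ⨆ i : H, E i := Ordinal.le_iSup (fun i : H => E i) ⟨_, hgα ▸ hαH⟩
  exact hidx α hα (hanti (hEo _) hσ hle hασ)

section Tree

variable {T : Ordinal.{0} → Set (Ordinal.{0} → Bool)} {o : Ordinal.{0}}

theorem antitoneOn_setOf_restrictMem {K : Type}
    (hT : ∀ ξ < o, ∀ ξ' < ξ, ∀ g ∈ T ξ, RestrictMem T ξ' g) (f : K → Ordinal.{0} → Bool) :
    AntitoneOn (fun ξ => {α | RestrictMem T ξ (f α)}) (Iio o) := by
  rintro ξ' - ξ hξ hle α ⟨g, hg, hgf⟩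
  rcases hle.lt_or_eq with hlt | rfl
  · obtain ⟨g', hg', hg'g⟩ := hT ξ hξ ξ' hlt g hg
    exact ⟨g', hg', fun η hη => (hg'g η hη).trans (hgf η (hη.trans hlt))⟩
  · exact ⟨g, hg, hgf⟩

theorem exists_lt_pairwise_ne_of_mk_prod_lt_cof {ι : Type} (hι : #(ι × ι) < o.cof)
    (F : ι → Ordinal.{0} → Bool) (hF : Pairwise fun a b => ∃ η < o, F a η ≠ F b η) :
    ∃ ξ < o, Pairwise fun a b => ∃ η < ξ, F a η ≠ F b η := by
  choose D hDo hD using fun p : {p : ι × ι // p.1 ≠ p.2} => hF p.2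
  have hcard : #{p : ι × ι // p.1 ≠ p.2} < o.cof := (mk_subtype_le _).trans_lt hι
  exact ⟨⨆ p, D p + 1, Ordinal.iSup_add_one_lt_of_lt_cof hcard hDo,
    fun a b hab => ⟨D ⟨(a, b), hab⟩, Ordinal.lt_iSup_add_one D _, hD ⟨(a, b), hab⟩⟩⟩

theorem countable_setOf_isBranch {K : Type} (hT : ∀ ξ < o, (T ξ).Countable)
    (hcof : aleph 1 < o.cof) (f : K → Ordinal.{0} → Bool)
    (hinj : ∀ α β, IsBranch T o (f α) → IsBranch T o (f β) → (∀ η < o, f α η = f β η) → α = β) :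
    {α | IsBranch T o (f α)}.Countable := by
  by_contra hunc
  have huncard : aleph 1 ≤ #{α | IsBranch T o (f α)} :=
    aleph_one_le_iff.mpr (not_le.mp (mt le_aleph0_iff_set_countable.mp hunc))
  obtain ⟨S, hSsub, hScard⟩ := le_mk_iff_exists_subset.mp huncard
  have hpairs : #(S × S) < o.cof := by
    rwa [mk_prod, lift_id, hScard, mul_eq_self (aleph0_le_aleph 1)]
  have hdistinct : Pairwise fun a b : S => ∃ η < o, f a η ≠ f b η := by
    intro a b hab
    by_contra! hagree
    exact hab (Subtype.ext (hinj a b (hSsub a.2) (hSsub b.2) hagree))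
  obtain ⟨ξ, hξo, hsplit⟩ :=
    exists_lt_pairwise_ne_of_mk_prod_lt_cof hpairs (fun a : S => f a) hdistinct
  choose G hG hGf using fun a : S => hSsub a.2 ξ hξo
  have hGinj : Function.Injective fun a : S => (⟨G a, hG a⟩ : T ξ) := by
    intro a b hab
    by_contra hne
    obtain ⟨η, hη, hfne⟩ := hsplit hne
    have hGab : G a = G b := congrArg Subtype.val hab
    exact hfne ((hGf a η hη).symm.trans (hGab ▸ hGf b η hη))
  have : Countable (T ξ) := (hT ξ hξo).to_subtype
  have hSle : #S ≤ aleph0 := mk_le_aleph0_iff.mpr hGinj.countable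
  exact (aleph0_lt_aleph_one.trans_le (hScard.symm.le.trans hSle)).false

end Tree

theorem stmt16_general {K : Type} (lam : Cardinal.{0})
    (T : Ordinal.{0} → Set (Ordinal.{0} → Bool))
    (hTcount : ∀ ξ < lam.ord, (T ξ).Countable)
    (hTtree : ∀ ξ < lam.ord, ∀ ξ' < ξ, ∀ g ∈ T ξ, ∃ g' ∈ T ξ', ∀ η < ξ', g' η = g η)
    (U : Ultrafilter K)
    (hindcf : ¬ MuDecomposable U lam.ord.cof)
    (f : K → Ordinal.{0} → Bool)
    (hX : ∀ ξ, ξ < lam.ord → {α : K | ∃ g ∈ T ξ, ∀ η < ξ, g η = f α η} ∈ U) :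
    {α : K | ∀ ξ, ξ < lam.ord → ∃ g ∈ T ξ, ∀ η < ξ, g η = f α η} ∈ U ∧
    (Cardinal.aleph 1 < lam.ord.cof →
      (∀ α β : K,
        (∀ ξ, ξ < lam.ord → ∃ g ∈ T ξ, ∀ η < ξ, g η = f α η) →
        (∀ ξ, ξ < lam.ord → ∃ g ∈ T ξ, ∀ η < ξ, g η = f β η) →
        (∀ η, η < lam.ord → f α η = f β η) → α = β) →
      ¬ {α : K | ∀ ξ, ξ < lam.ord → ∃ g ∈ T ξ, ∀ η < ξ, g η = f α η}.Countable →
      False) := by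
  have hbranches : {α | IsBranch T lam.ord (f α)} ∈ U := by
    have := U.biInter_lt_mem_of_antitoneOn hindcf (antitoneOn_setOf_restrictMem hTtree f) hX
    rwa [show ⋂ ξ < lam.ord, {α | RestrictMem T ξ (f α)} = {α | IsBranch T lam.ord (f α)} from
      Set.ext fun _ => mem_iInter₂] at this
  exact ⟨hbranches, fun hcof hinj hunc => hunc (countable_setOf_isBranch hTcount hcof f hinj)⟩

/-- Suppose `λ` is a cardinal of uncountable cofinality, `T ⊆ ^{<λ}2` is a tree (closed
under restriction) with countable levels, `U` is an ultrafilter over `K` that is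
`ν`-indecomposable for every uncountable `ν < κ` where `cf(λ) < κ`, and
`⟨f_α | α ∈ K⟩` satisfies `X_ξ = {α | f_α ↾ ξ ∈ T_ξ} ∈ U` for all `ξ < λ`.  If
`cf(λ) > ℵ₀` and `U` is `cf(λ)`-indecomposable, then `X* = ⋂_{ξ<λ} X_ξ ∈ U`; in
particular, if the `f_α` for `α ∈ X*` are pairwise distinct, `X*` is uncountable, and
`cf(λ) > ℵ₁`, a contradiction arises. -/
theorem stmt16 {K : Type} (lam κ : Cardinal.{0}) (hlam : aleph0 ≤ lam)
    (hcof : aleph0 < lam.ord.cof) (hcofκ : lam.ord.cof < κ)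
    (T : Ordinal.{0} → Set (Ordinal.{0} → Bool))
    (hTcount : ∀ ξ < lam.ord, (T ξ).Countable)
    (hTtree : ∀ ξ < lam.ord, ∀ ξ' < ξ, ∀ g ∈ T ξ, ∃ g' ∈ T ξ', ∀ η < ξ', g' η = g η)
    (U : Ultrafilter K)
    (hind : ∀ ν : Cardinal.{0}, aleph0 < ν → ν < κ → ¬ MuDecomposable U ν)
    (hindcf : ¬ MuDecomposable U lam.ord.cof)
    (f : K → Ordinal.{0} → Bool)
    (hX : ∀ ξ, ξ < lam.ord → {α : K | ∃ g ∈ T ξ, ∀ η < ξ, g η = f α η} ∈ U) :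
    {α : K | ∀ ξ, ξ < lam.ord → ∃ g ∈ T ξ, ∀ η < ξ, g η = f α η} ∈ U ∧
    (Cardinal.aleph 1 < lam.ord.cof →
      (∀ α β : K,
        (∀ ξ, ξ < lam.ord → ∃ g ∈ T ξ, ∀ η < ξ, g η = f α η) →
        (∀ ξ, ξ < lam.ord → ∃ g ∈ T ξ, ∀ η < ξ, g η = f β η) →
        (∀ η, η < lam.ord → f α η = f β η) → α = β) →
      ¬ {α : K | ∀ ξ, ξ < lam.ord → ∃ g ∈ T ξ, ∀ η < ξ, g η = f α η}.Countable →
      False) :=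
  stmt16_general lam T hTcount hTtree U hindcf f hX
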